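/- In the propositional system CL9, the formula (¬P ▽ P) ∧ (P ▽ ¬P) → (P ⊔ ¬P) is provable, where P is a general atom. -/
import Mathlib


/-- CL9-formulas (binary versions of the connectives; negation is applied
only to atoms, i.e., formulas are in negation normal form):
`elit b i` is the elementary literal on atom `i` (negated when `b = false`),
`glit b i` is the general literal on atom `i`;
`pand`/`por` are parallel ∧/∨, `cand`/`cor` are choice ⊓/⊔,
`sand`/`sor` are sequential △/▽. -/
inductive Fml where
  | top : Fml
  | bot : Fml
  | elit : Bool → ℕ → Fml
  | glit : Bool → ℕ → Fml
  | pand : Fml → Fml → Fml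
  | por  : Fml → Fml → Fml
  | cand : Fml → Fml → Fml
  | cor  : Fml → Fml → Fml
  | sand : Fml → Fml → Fml
  | sor  : Fml → Fml → Fml
deriving DecidableEq

namespace Fml

/-- Negation, pushed to atoms via the De Morgan dualities. -/
def neg : Fml → Fml
  | top => bot
  | bot => top
  | elit b i => elit (!b) i
  | glit b i => glit (!b) i
  | pand A B => por A.neg B.neg
  | por A B => pand A.neg B.neg
  | cand A B => cor A.neg B.neg
  | cor A B => cand A.neg B.neg
  | sand A B => sor A.neg B.neg
  | sor A B => sand A.neg B.neg

/-- E → F abbreviates ¬E ∨ F. -/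
def imp (A B : Fml) : Fml := por A.neg B

/-- `SRepl G G' F H` holds iff `H` is the result of replacing in `F` one
surface occurrence of `G` (an occurrence not in the scope of a choice
connective and not in the tail of a sequential subformula) by `G'`. -/
inductive SRepl (G G' : Fml) : Fml → Fml → Prop where
  | here : SRepl G G' G G'
  | pandL {A A' B} : SRepl G G' A A' → SRepl G G' (pand A B) (pand A' B)
  | pandR {A B B'} : SRepl G G' B B' → SRepl G G' (pand A B) (pand A B')
  | porL {A A' B} : SRepl G G' A A' → SRepl G G' (por A B) (por A' B)
  | porR {A B B'} : SRepl G G' B B' → SRepl G G' (por A B) (por A B')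
  | sandL {A A' B} : SRepl G G' A A' → SRepl G G' (sand A B) (sand A' B)
  | sorL {A A' B} : SRepl G G' A A' → SRepl G G' (sor A B) (sor A' B)

/-- The elementarization of a formula: each sequential subformula is replaced
by its head (capitalization), each surface ⊓-subformula by ⊤, each surface
⊔-subformula by ⊥, and each surface general literal by ⊥. -/
def elz : Fml → Fml
  | top => top
  | bot => bot
  | elit b i => elit b i
  | glit _ _ => bot
  | pand A B => pand (elz A) (elz B)
  | por A B => por (elz A) (elz B)
  | cand _ _ => top
  | cor _ _ => bot
  | sand A _ => elz A
  | sor A _ => elz A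

/-- Classical evaluation of a formula under a truth assignment (only its
values on elementary formulas matter). -/
def eval (v : ℕ → Bool) : Fml → Bool
  | top => true
  | bot => false
  | elit b i => if b then v i else !(v i)
  | glit _ _ => false
  | pand A B => eval v A && eval v B
  | por A B => eval v A || eval v B
  | cand A B => eval v A && eval v B
  | cor A B => eval v A || eval v B
  | sand A _ => eval v A
  | sor A _ => eval v A

/-- Classical tautologyhood. -/
def Taut (F : Fml) : Prop := ∀ v : ℕ → Bool, eval v F = true

/-- A formula is stable iff its elementarization is a classical tautology. -/
def Stable (F : Fml) : Prop := Taut (elz F)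

/-- The elementary atom `q` occurs in the formula. -/
def elemOccurs (q : ℕ) : Fml → Prop
  | top => False
  | bot => False
  | elit _ i => i = q
  | glit _ _ => False
  | pand A B => elemOccurs q A ∨ elemOccurs q B
  | por A B => elemOccurs q A ∨ elemOccurs q B
  | cand A B => elemOccurs q A ∨ elemOccurs q B
  | cor A B => elemOccurs q A ∨ elemOccurs q B
  | sand A B => elemOccurs q A ∨ elemOccurs q B
  | sor A B => elemOccurs q A ∨ elemOccurs q B

end Fml

open Fml

/-- The proof system CL9, given by the rules Wait, Choose, Switch and Match. -/
inductive CL9 : Fml → Prop where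
  /-- Wait: `F` is stable, and every result of replacing a surface
  ⊓-subformula of `F` by one of its conjuncts is provable, and every result
  of replacing a surface △-subformula of `F` by its tail is provable. -/
  | wait (F : Fml) (hst : Stable F)
      (hcand₁ : ∀ A B H, SRepl (cand A B) A F H → CL9 H)
      (hcand₂ : ∀ A B H, SRepl (cand A B) B F H → CL9 H)
      (hsand : ∀ A B H, SRepl (sand A B) B F H → CL9 H) :
      CL9 F
  /-- Choose: replace a surface ⊔-subformula by one of its disjuncts. -/
  | choose {F H : Fml} (A B : Fml)
      (h : SRepl (cor A B) A F H ∨ SRepl (cor A B) B F H)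
      (hp : CL9 H) : CL9 F
  /-- Switch: replace a surface ▽-subformula by its tail. -/
  | switch {F H : Fml} (A B : Fml)
      (h : SRepl (sor A B) B F H)
      (hp : CL9 H) : CL9 F
  /-- Match: replace one positive and one negative surface occurrence of a
  general atom `P` by a fresh elementary atom `q`. -/
  | match' {F H : Fml} (F₁ : Fml) (P q : ℕ)
      (hfresh : ¬ elemOccurs q F)
      (h₁ : SRepl (glit true P) (elit true q) F F₁)
      (h₂ : SRepl (glit false P) (elit false q) F₁ H)
      (hp : CL9 H) : CL9 F

open Fml in
/-- Wait with no applicable premises, plus stability. -/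
theorem waitEasy (F : Fml) (hst : Stable F)
    (h1 : ∀ A B H, SRepl (cand A B) A F H → False)
    (h2 : ∀ A B H, SRepl (cand A B) B F H → False)
    (h3 : ∀ A B H, SRepl (sand A B) B F H → False) : CL9 F :=
  CL9.wait F hst (fun A B H h => (h1 A B H h).elim)
    (fun A B H h => (h2 A B H h).elim) (fun A B H h => (h3 A B H h).elim)

/-- CL9 proves (¬P ▽ P) ∧ (P ▽ ¬P) → (P ⊔ ¬P) for any general
atom P. -/
theorem stmt5 (i : ℕ) :
    CL9 (Fml.imp
      (Fml.pand (Fml.sor (Fml.glit false i) (Fml.glit true i))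
                (Fml.sor (Fml.glit true i) (Fml.glit false i)))
      (Fml.cor (Fml.glit true i) (Fml.glit false i))) := by
  show CL9 (por (por (sand (glit true i) (glit false i))
                     (sand (glit false i) (glit true i)))
                (cor (glit true i) (glit false i)))
  refine CL9.match'
    (por (por (sand (elit true 0) (glit false i))
              (sand (glit false i) (glit true i)))
         (cor (glit true i) (glit false i))) i 0
    (by simp [elemOccurs])
    (SRepl.porL (SRepl.porL (SRepl.sandL SRepl.here)))
    (SRepl.porL (SRepl.porR (SRepl.sandL SRepl.here))) ?_
  refine CL9.wait _ (fun v => by cases h0 : v 0 <;> simp [elz, eval, h0]) ?_ ?_ ?_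
  · intro A B H h; exfalso; repeat' cases ‹Fml.SRepl _ _ _ _›
  · intro A B H h; exfalso; repeat' cases ‹Fml.SRepl _ _ _ _›
  · intro A B H h
    repeat' cases ‹Fml.SRepl _ _ _ _›
    -- Goal 1: H1 = por (por P⁻ (sand q⁻ P⁺)) C
    · refine CL9.choose (glit true i) (glit false i)
        (Or.inl (SRepl.porR SRepl.here)) ?_
      refine CL9.match'
        (por (por (glit false i) (sand (elit false 0) (glit true i))) (elit true 1)) i 1
        (by simp [elemOccurs])
        (SRepl.porR SRepl.here)
        (SRepl.porL (SRepl.porL SRepl.here)) ?_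
      refine CL9.wait _
        (fun v => by cases h0 : v 0 <;> cases h1 : v 1 <;> simp [elz, eval, h0, h1]) ?_ ?_ ?_
      · intro A B H h; exfalso; repeat' cases ‹Fml.SRepl _ _ _ _›
      · intro A B H h; exfalso; repeat' cases ‹Fml.SRepl _ _ _ _›
      · intro A B H h
        repeat' cases ‹Fml.SRepl _ _ _ _›
        refine waitEasy _
          (fun v => by cases h0 : v 0 <;> cases h1 : v 1 <;> simp [elz, eval, h0, h1])
          ?_ ?_ ?_ <;>
          (intro A B H h; repeat' cases ‹Fml.SRepl _ _ _ _›)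
    -- Goal 2: H2 = por (por (sand q⁺ P⁻) P⁺) C
    · refine CL9.choose (glit true i) (glit false i)
        (Or.inr (SRepl.porR SRepl.here)) ?_
      refine CL9.match'
        (por (por (sand (elit true 0) (glit false i)) (elit true 1)) (glit false i)) i 1
        (by simp [elemOccurs])
        (SRepl.porL (SRepl.porR SRepl.here))
        (SRepl.porR SRepl.here) ?_
      refine CL9.wait _
        (fun v => by cases h0 : v 0 <;> cases h1 : v 1 <;> simp [elz, eval, h0, h1]) ?_ ?_ ?_
      · intro A B H h; exfalso; repeat' cases ‹Fml.SRepl _ _ _ _›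
      · intro A B H h; exfalso; repeat' cases ‹Fml.SRepl _ _ _ _›
      · intro A B H h
        repeat' cases ‹Fml.SRepl _ _ _ _›
        refine waitEasy _
          (fun v => by cases h0 : v 0 <;> cases h1 : v 1 <;> simp [elz, eval, h0, h1])
          ?_ ?_ ?_ <;>
          (intro A B H h; repeat' cases ‹Fml.SRepl _ _ _ _›)
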